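/- Let n ≥ 3 be an integer, 0 < m < (n-2)/n, ρ₁ > 0, β ≥ β₁ = ρ₁/(n-2-nm), α = (2β+ρ₁)/(1-m), and λ₂ > λ₁ > 0. For i = 1,2 let g_{λ_i} be a radially symmetric solution of Δv^m + αv + βx·∇v = 0, v > 0, in ℝ^n∖{0} satisfying lim_{r→0+} r^{α/β} g_{λ_i}(r) = λ_i^{-ρ₁/((1-m)β)}. Then g_{λ₂}(r) < g_{λ₁}(r) for all r > 0. -/

import Mathlib

open Real Filter Set

noncomputable section

/-- A radially symmetric solution of `Δ v^m + α v + β x·∇v = 0`, `v > 0`, in `ℝⁿ \ {0}`,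
identified with a smooth positive function on `(0,∞)` satisfying the radial ODE. -/
def IsSingularSolution (n : ℕ) (m α β : ℝ) (g : ℝ → ℝ) : Prop :=
  (∀ r > 0, 0 < g r) ∧ ContDiffOn ℝ (⊤ : ℕ∞) g (Ioi 0) ∧
    ∀ r > 0,
      deriv (deriv (fun x => g x ^ m)) r
        + (((n : ℝ) - 1) / r) * deriv (fun x => g x ^ m) r
        + α * g r + β * r * deriv g r = 0

open Topology

/-!
Put `w = g₁ - g₂` and `q = g₁ ^ m - g₂ ^ m`. In divergence form the equation says that the flux
`Φ g = r ^ (n - 1) (g ^ m)' + β r ^ n g` of a solution satisfies `(Φ g)' = (n β - α) r ^ (n - 1) g`,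
so, as `α ≤ n β`, `Φ g₁ - Φ g₂` is nondecreasing as long as `w > 0`. Since `r ^ (α / β) w` tends to
`L₁ - L₂ > 0`, `w > 0` near `0`. At a first zero `r₀` of `w` we have `q'(r₀) ≤ 0`, hence
`(Φ g₁ - Φ g₂)(r₀) ≤ 0`, and monotonicity yields `r ^ (n - 1) q' ≤ -δ < 0` near `0`: for `α = n β`
because `β r ^ n w → β (L₁ - L₂) > 0`, for `α < n β` by strict monotonicity. Integrating,
`r ^ (n - 2) q` stays above a positive constant near `0`, whereas
`r ^ (n - 2) q ≤ (r ^ (α / β) g₁) ^ m r ^ (n - 2 - m α / β) → 0`.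
-/

lemma tendsto_rpow_nhdsGT_zero {k : ℝ} (hk : 0 < k) :
    Tendsto (fun x : ℝ => x ^ k) (𝓝[>] 0) (𝓝 0) := by
  simpa [Real.zero_rpow hk.ne'] using
    (Real.continuousAt_rpow_const 0 k (Or.inr hk.le)).tendsto.mono_left nhdsWithin_le_nhds

lemma tendsto_rpow_mul_rpow_nhdsGT_zero {g : ℝ → ℝ} {p m k L : ℝ} (hg : ∀ x > 0, 0 ≤ g x)
    (hm : 0 ≤ m) (hk : m * p < k) (h : Tendsto (fun x => x ^ p * g x) (𝓝[>] 0) (𝓝 L)) :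
    Tendsto (fun x => x ^ k * g x ^ m) (𝓝[>] 0) (𝓝 0) := by
  have hsplit : ∀ x > 0, (x ^ p * g x) ^ m * x ^ (k - m * p) = x ^ k * g x ^ m := by
    intro x hx
    rw [Real.mul_rpow (rpow_nonneg hx.le p) (hg x hx), ← Real.rpow_mul hx.le, mul_right_comm,
      ← Real.rpow_add hx, mul_comm p m, add_sub_cancel, mul_comm]
  have hlim := (h.rpow_const (Or.inr hm)).mul (tendsto_rpow_nhdsGT_zero (sub_pos.mpr hk))
  rw [mul_zero] at hlim
  exact hlim.congr' (eventually_nhdsWithin_of_forall hsplit)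

lemma exists_first_nonpos {f : ℝ → ℝ} (hf : ContinuousOn f (Ioi 0))
    (hpos : ∀ᶠ x in 𝓝[>] 0, 0 < f x) {r : ℝ} (hr : 0 < r) (hfr : f r ≤ 0) :
    ∃ r₀ > 0, f r₀ ≤ 0 ∧ ∀ x ∈ Ioo 0 r₀, 0 < f x := by
  obtain ⟨ε, hε, hεf⟩ := mem_nhdsGT_iff_exists_Ioo_subset.mp hpos
  have hεr : ε ≤ r := not_lt.mp fun hrε => (hεf ⟨hr, hrε⟩ : 0 < f r).not_ge hfr
  have hS : IsCompact (Icc ε r ∩ f ⁻¹' Iic 0) :=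
    isCompact_Icc.of_isClosed_subset
      ((hf.mono fun x hx => lt_of_lt_of_le hε hx.1).preimage_isClosed_of_isClosed isClosed_Icc
        isClosed_Iic) inter_subset_left
  obtain ⟨r₀, ⟨hr₀, hfr₀⟩, hleast⟩ := hS.exists_isLeast ⟨r, ⟨hεr, le_rfl⟩, hfr⟩
  refine ⟨r₀, lt_of_lt_of_le hε hr₀.1, hfr₀, fun x hx => not_le.mp fun hfx => ?_⟩
  rcases lt_or_ge x ε with hxε | hεx
  · exact (hεf ⟨hx.1, hxε⟩ : 0 < f x).not_ge hfx
  · exact (hleast ⟨⟨hεx, hx.2.le.trans hr₀.2⟩, hfx⟩).not_gt hx.2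

lemma HasDerivAt.nonpos_of_le_left {f : ℝ → ℝ} {f' a b : ℝ} (hf : HasDerivAt f f' b)
    (hab : a < b) (hmin : ∀ x ∈ Ioo a b, f b ≤ f x) : f' ≤ 0 := by
  refine le_of_tendsto hf.tendsto_slope_zero_left ?_
  filter_upwards [Ioo_mem_nhdsLT (sub_neg.mpr hab)] with t ht
  have hft : f b ≤ f (b + t) := hmin _ ⟨by linarith [ht.1], by linarith [ht.2]⟩
  exact mul_nonpos_of_nonpos_of_nonneg (inv_nonpos.mpr ht.2.le) (sub_nonneg.mpr hft)

lemma eventually_le_rpow_mul_of_rpow_mul_deriv_le {q q' : ℝ → ℝ} {k δ c : ℝ} (hk : 0 < k)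
    (hq : ∀ᶠ x in 𝓝[>] 0, HasDerivAt q (q' x) x)
    (hle : ∀ᶠ x in 𝓝[>] 0, x ^ (k + 1) * q' x ≤ -δ) (hc : c < δ / k) :
    ∀ᶠ x in 𝓝[>] 0, c ≤ x ^ k * q x := by
  obtain ⟨s, hs, hsub⟩ := mem_nhdsGT_iff_exists_Ioc_subset.mp (hq.and hle)
  set H : ℝ → ℝ := fun x => q x - δ / k * x ^ (-k)
  have hH : ∀ x ∈ Ioc 0 s, HasDerivAt H (q' x + δ * x ^ (-k - 1)) x := by
    intro x hx
    refine ((hsub hx).1.sub ((Real.hasDerivAt_rpow_const (p := -k) (Or.inl hx.1.ne')).const_mul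
      (δ / k))).congr_deriv ?_
    field_simp [hk.ne']
    ring
  have hanti : AntitoneOn H (Ioc 0 s) := by
    refine antitoneOn_of_hasDerivWithinAt_nonpos (convex_Ioc 0 s)
      (fun x hx => (hH x hx).continuousAt.continuousWithinAt)
      (fun x hx => (hH x (interior_subset hx)).hasDerivWithinAt) fun x hx => ?_
    obtain ⟨hx0, hxs⟩ := interior_subset hx
    have hprod : x ^ (k + 1) * x ^ (-k - 1) = 1 := by
      rw [← Real.rpow_add hx0]; simp
    have hqx := mul_le_mul_of_nonneg_right (hsub ⟨hx0, hxs⟩).2 (rpow_nonneg hx0.le (-k - 1))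
    rw [mul_right_comm, hprod, one_mul] at hqx
    linarith
  have hsmall : ∀ᶠ x in 𝓝[>] 0, c - δ / k < x ^ k * H s := by
    have := (tendsto_rpow_nhdsGT_zero hk).mul_const (H s)
    rw [zero_mul] at this
    exact this.eventually_const_lt (by linarith)
  filter_upwards [hsmall, Ioc_mem_nhdsGT hs] with x hx hxs
  have hHx : H s ≤ H x := hanti hxs ⟨hs, le_rfl⟩ hxs.2
  have hxk : x ^ k * x ^ (-k) = 1 := by rw [← Real.rpow_add hxs.1]; simp
  calc c ≤ δ / k + x ^ k * H s := by linarith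
    _ ≤ δ / k + x ^ k * H x := by
      have := mul_le_mul_of_nonneg_left hHx (rpow_nonneg hxs.1.le k)
      linarith
    _ = x ^ k * q x := by
      simp only [H]
      linear_combination -(δ / k) * hxk

/-- Multiplied by `r ^ (n - 1)`, the radial equation reads
`(r ^ (n - 1) (g ^ m)')' + α r ^ (n - 1) g + β r ^ n g' = 0`. -/
def radialFlux (n : ℕ) (m β : ℝ) (g : ℝ → ℝ) (r : ℝ) : ℝ :=
  r ^ ((n : ℝ) - 1) * deriv (fun x => g x ^ m) r + β * r ^ (n : ℝ) * g r

lemma ContDiffOn.hasDerivAt_deriv {f : ℝ → ℝ} {s : Set ℝ} {k : WithTop ℕ∞}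
    (hf : ContDiffOn ℝ k f s) (hk : k ≠ 0) {r : ℝ} (hs : s ∈ 𝓝 r) : HasDerivAt f (deriv f r) r :=
  ((hf.differentiableOn hk).differentiableAt hs).hasDerivAt

namespace IsSingularSolution

variable {n : ℕ} {m α β : ℝ} {g g₁ g₂ : ℝ → ℝ}

lemma continuousOn (hg : IsSingularSolution n m α β g) : ContinuousOn g (Ioi 0) :=
  hg.2.1.continuousOn

lemma contDiffOn_rpow (hg : IsSingularSolution n m α β g) :
    ContDiffOn ℝ (⊤ : ℕ∞) (fun x => g x ^ m) (Ioi 0) := fun x hx =>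
  ((hg.2.1.contDiffAt (Ioi_mem_nhds hx)).rpow_const_of_ne (hg.1 x hx).ne').contDiffWithinAt

lemma hasDerivAt (hg : IsSingularSolution n m α β g) {r : ℝ} (hr : 0 < r) :
    HasDerivAt g (deriv g r) r :=
  hg.2.1.hasDerivAt_deriv (by simp) (Ioi_mem_nhds hr)

lemma hasDerivAt_rpow (hg : IsSingularSolution n m α β g) {r : ℝ} (hr : 0 < r) :
    HasDerivAt (fun x => g x ^ m) (deriv (fun x => g x ^ m) r) r :=
  hg.contDiffOn_rpow.hasDerivAt_deriv (by simp) (Ioi_mem_nhds hr)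

lemma hasDerivAt_deriv_rpow (hg : IsSingularSolution n m α β g) {r : ℝ} (hr : 0 < r) :
    HasDerivAt (deriv fun x => g x ^ m) (deriv (deriv fun x => g x ^ m) r) r :=
  (hg.contDiffOn_rpow.deriv_of_isOpen (m := 1) isOpen_Ioi (WithTop.coe_le_coe.mpr le_top)).hasDerivAt_deriv one_ne_zero
    (Ioi_mem_nhds hr)

lemma hasDerivAt_radialFlux (hg : IsSingularSolution n m α β g) {r : ℝ} (hr : 0 < r) :
    HasDerivAt (radialFlux n m β g) ((n * β - α) * r ^ ((n : ℝ) - 1) * g r) r := by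
  have hpow (p : ℝ) := Real.hasDerivAt_rpow_const (p := p) (Or.inl hr.ne')
  refine (((hpow ((n : ℝ) - 1)).mul (hg.hasDerivAt_deriv_rpow hr)).add
    (((hpow n).const_mul β).mul (hg.hasDerivAt hr))).congr_deriv ?_
  have hode := hg.2.2 r hr
  have e1 : r ^ ((n : ℝ) - 1) = r ^ ((n : ℝ) - 1 - 1) * r := by
    rw [← Real.rpow_add_one hr.ne']; ring_nf
  have e2 : r ^ (n : ℝ) = r ^ ((n : ℝ) - 1) * r := by
    rw [← Real.rpow_add_one hr.ne']; ring_nf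
  have hcancel : ((n : ℝ) - 1) / r * r = (n : ℝ) - 1 := div_mul_cancel₀ _ hr.ne'
  rw [e2, e1]
  linear_combination (r ^ ((n : ℝ) - 1 - 1) * r) * hode
    - (r ^ ((n : ℝ) - 1 - 1) * deriv (fun x => g x ^ m) r) * hcancel

lemma hasDerivAt_radialFlux_sub (hg₁ : IsSingularSolution n m α β g₁)
    (hg₂ : IsSingularSolution n m α β g₂) {r : ℝ} (hr : 0 < r) :
    HasDerivAt (fun x => radialFlux n m β g₁ x - radialFlux n m β g₂ x)
      ((n * β - α) * r ^ ((n : ℝ) - 1) * (g₁ r - g₂ r)) r :=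
  ((hg₁.hasDerivAt_radialFlux hr).sub (hg₂.hasDerivAt_radialFlux hr)).congr_deriv (by ring)

lemma monotoneOn_radialFlux_sub (hg₁ : IsSingularSolution n m α β g₁)
    (hg₂ : IsSingularSolution n m α β g₂) (hαβ : α ≤ n * β) {r₀ : ℝ}
    (hw : ∀ x ∈ Ioo 0 r₀, g₂ x < g₁ x) :
    MonotoneOn (fun x => radialFlux n m β g₁ x - radialFlux n m β g₂ x) (Ioc 0 r₀) := by
  refine monotoneOn_of_hasDerivWithinAt_nonneg (convex_Ioc 0 r₀)
    (fun x hx => (hasDerivAt_radialFlux_sub hg₁ hg₂ hx.1).continuousAt.continuousWithinAt)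
    (fun x hx => (hasDerivAt_radialFlux_sub hg₁ hg₂ (interior_subset hx).1).hasDerivWithinAt)
    fun x hx => ?_
  rw [interior_Ioc] at hx
  have := sub_pos.mpr (hw x hx)
  have := rpow_pos_of_pos hx.1 ((n : ℝ) - 1)
  have : 0 ≤ n * β - α := sub_nonneg.mpr hαβ
  positivity

lemma strictMonoOn_radialFlux_sub (hg₁ : IsSingularSolution n m α β g₁)
    (hg₂ : IsSingularSolution n m α β g₂) (hαβ : α < n * β) {r₀ : ℝ}
    (hw : ∀ x ∈ Ioo 0 r₀, g₂ x < g₁ x) :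
    StrictMonoOn (fun x => radialFlux n m β g₁ x - radialFlux n m β g₂ x) (Ioc 0 r₀) := by
  refine strictMonoOn_of_hasDerivWithinAt_pos (convex_Ioc 0 r₀)
    (fun x hx => (hasDerivAt_radialFlux_sub hg₁ hg₂ hx.1).continuousAt.continuousWithinAt)
    (fun x hx => (hasDerivAt_radialFlux_sub hg₁ hg₂ (interior_subset hx).1).hasDerivWithinAt)
    fun x hx => ?_
  rw [interior_Ioc] at hx
  have := sub_pos.mpr (hw x hx)
  have := rpow_pos_of_pos hx.1 ((n : ℝ) - 1)
  have : 0 < n * β - α := sub_pos.mpr hαβ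
  positivity

lemma radialFlux_sub_nonpos (hg₁ : IsSingularSolution n m α β g₁)
    (hg₂ : IsSingularSolution n m α β g₂) (hm : 0 < m) (hβ : 0 ≤ β) {r₀ : ℝ} (hr₀ : 0 < r₀)
    (hle : g₁ r₀ ≤ g₂ r₀) (hw : ∀ x ∈ Ioo 0 r₀, g₂ x < g₁ x) :
    radialFlux n m β g₁ r₀ - radialFlux n m β g₂ r₀ ≤ 0 := by
  have hq : deriv (fun x => g₁ x ^ m) r₀ - deriv (fun x => g₂ x ^ m) r₀ ≤ 0 := by
    refine ((hg₁.hasDerivAt_rpow hr₀).sub (hg₂.hasDerivAt_rpow hr₀)).nonpos_of_le_left hr₀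
      fun x hx => ?_
    have h₀ : g₁ r₀ ^ m ≤ g₂ r₀ ^ m := rpow_le_rpow (hg₁.1 r₀ hr₀).le hle hm.le
    have hx : g₂ x ^ m < g₁ x ^ m := rpow_lt_rpow (hg₂.1 x hx.1).le (hw x hx) hm
    show g₁ r₀ ^ m - g₂ r₀ ^ m ≤ g₁ x ^ m - g₂ x ^ m
    linarith
  have hsplit : radialFlux n m β g₁ r₀ - radialFlux n m β g₂ r₀ =
      r₀ ^ ((n : ℝ) - 1) * (deriv (fun x => g₁ x ^ m) r₀ - deriv (fun x => g₂ x ^ m) r₀)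
        + β * r₀ ^ (n : ℝ) * (g₁ r₀ - g₂ r₀) := by
    simp only [radialFlux]; ring
  rw [hsplit]
  exact add_nonpos (mul_nonpos_of_nonneg_of_nonpos (rpow_nonneg hr₀.le _) hq)
    (mul_nonpos_of_nonneg_of_nonpos (by positivity) (sub_nonpos.mpr hle))

lemma exists_rpow_mul_deriv_sub_le (hg₁ : IsSingularSolution n m α β g₁)
    (hg₂ : IsSingularSolution n m α β g₂) (hm : 0 < m) (hβ : 0 < β) (hαβ : α ≤ n * β) {L : ℝ}
    (hL : 0 < L) (hlim : Tendsto (fun x => x ^ (α / β) * (g₁ x - g₂ x)) (𝓝[>] 0) (𝓝 L))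
    {r₀ : ℝ} (hr₀ : 0 < r₀) (hle : g₁ r₀ ≤ g₂ r₀) (hw : ∀ x ∈ Ioo 0 r₀, g₂ x < g₁ x) :
    ∃ δ > 0, ∀ᶠ x in 𝓝[>] 0,
      x ^ ((n : ℝ) - 1) * (deriv (fun y => g₁ y ^ m) x - deriv (fun y => g₂ y ^ m) x) ≤ -δ := by
  set G := fun x => radialFlux n m β g₁ x - radialFlux n m β g₂ x
  have hmono : MonotoneOn G (Ioc 0 r₀) := monotoneOn_radialFlux_sub hg₁ hg₂ hαβ hw
  have hGr₀ : G r₀ ≤ 0 := radialFlux_sub_nonpos hg₁ hg₂ hm hβ.le hr₀ hle hw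
  have hsplit : ∀ x, x ^ ((n : ℝ) - 1) *
      (deriv (fun y => g₁ y ^ m) x - deriv (fun y => g₂ y ^ m) x) =
        G x - β * (x ^ (n : ℝ) * (g₁ x - g₂ x)) := by
    intro x; simp only [G, radialFlux]; ring
  rcases hαβ.eq_or_lt with heq | hlt
  · have hp : α / β = n := by rw [heq, mul_div_cancel_right₀ _ hβ.ne']
    rw [hp] at hlim
    refine ⟨β * L / 2, by positivity, ?_⟩
    filter_upwards [(hlim.const_mul β).eventually_const_lt (by nlinarith : β * L / 2 < β * L),
      Ioo_mem_nhdsGT hr₀] with x hx hx₀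
    have := hmono ⟨hx₀.1, hx₀.2.le⟩ ⟨hr₀, le_rfl⟩ hx₀.2.le
    rw [hsplit]
    linarith
  · have hhalf : G (r₀ / 2) < G r₀ := strictMonoOn_radialFlux_sub hg₁ hg₂ hlt hw
      ⟨half_pos hr₀, by linarith⟩ ⟨hr₀, le_rfl⟩ (half_lt_self hr₀)
    refine ⟨-G (r₀ / 2), by linarith, ?_⟩
    filter_upwards [Ioc_mem_nhdsGT (half_pos hr₀)] with x hx
    have := hmono ⟨hx.1, by linarith [hx.2]⟩ ⟨half_pos hr₀, by linarith⟩ hx.2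
    have := sub_pos.mpr (hw x ⟨hx.1, by linarith [hx.2]⟩)
    have := rpow_pos_of_pos hx.1 (n : ℝ)
    have : 0 ≤ β * (x ^ (n : ℝ) * (g₁ x - g₂ x)) := by positivity
    rw [hsplit]
    linarith

theorem lt_of_tendsto (hn : 2 < n) (hm : 0 < m) (hβ : 0 < β) (hαβ : α ≤ n * β)
    (hmα : m * (α / β) < n - 2) (hg₁ : IsSingularSolution n m α β g₁)
    (hg₂ : IsSingularSolution n m α β g₂) {L₁ L₂ : ℝ}
    (hlim₁ : Tendsto (fun x => x ^ (α / β) * g₁ x) (𝓝[>] 0) (𝓝 L₁))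
    (hlim₂ : Tendsto (fun x => x ^ (α / β) * g₂ x) (𝓝[>] 0) (𝓝 L₂)) (hL : L₂ < L₁)
    {r : ℝ} (hr : 0 < r) : g₂ r < g₁ r := by
  have hlim : Tendsto (fun x => x ^ (α / β) * (g₁ x - g₂ x)) (𝓝[>] 0) (𝓝 (L₁ - L₂)) := by
    simpa only [mul_sub] using hlim₁.sub hlim₂
  have hnear : ∀ᶠ x in 𝓝[>] 0, 0 < g₁ x - g₂ x := by
    filter_upwards [hlim.eventually_const_lt (sub_pos.mpr hL), self_mem_nhdsWithin] with x hx hx₀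
    exact pos_of_mul_pos_right hx (rpow_nonneg (le_of_lt hx₀) _)
  by_contra! hle
  obtain ⟨r₀, hr₀, hle₀, hw⟩ := exists_first_nonpos (f := fun x => g₁ x - g₂ x)
    (hg₁.continuousOn.sub hg₂.continuousOn) hnear hr (sub_nonpos.mpr hle)
  replace hw : ∀ x ∈ Ioo 0 r₀, g₂ x < g₁ x := fun x hx => sub_pos.mp (hw x hx)
  obtain ⟨δ, hδ, hflux⟩ := exists_rpow_mul_deriv_sub_le hg₁ hg₂ hm hβ hαβ (sub_pos.mpr hL) hlim
    hr₀ (sub_nonpos.mp hle₀) hw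
  have hk : (0 : ℝ) < n - 2 := by
    have : (2 : ℝ) < n := by exact_mod_cast hn
    linarith
  have hlower := eventually_le_rpow_mul_of_rpow_mul_deriv_le (q := fun x => g₁ x ^ m - g₂ x ^ m)
    (c := δ / (n - 2) / 2) hk
    (eventually_nhdsWithin_of_forall fun x hx => (hg₁.hasDerivAt_rpow hx).sub
      (hg₂.hasDerivAt_rpow hx))
    (by simpa only [show (n : ℝ) - 2 + 1 = n - 1 by ring] using hflux)
    (half_lt_self (by positivity))
  have hupper := tendsto_rpow_mul_rpow_nhdsGT_zero (fun x hx => (hg₁.1 x hx).le) hm.le hmα hlim₁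
  have : δ / (n - 2) / 2 ≤ 0 := by
    refine ge_of_tendsto hupper ?_
    filter_upwards [hlower, self_mem_nhdsWithin] with x hx hx₀
    have := rpow_pos_of_pos (hg₂.1 x hx₀) m
    have := rpow_nonneg (le_of_lt hx₀) ((n : ℝ) - 2)
    nlinarith
  have : 0 < δ / (n - 2) / 2 := by positivity
  linarith

end IsSingularSolution

/-- comparison of singular solutions: if `λ₂ > λ₁ > 0` then
`g_{λ₂}(r) < g_{λ₁}(r)` for all `r > 0`. -/
theorem stmt11 (n : ℕ) (m ρ₁ lam₁ lam₂ β α : ℝ)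
    (hn : 3 ≤ n) (hm : 0 < m) (hm2 : m < ((n : ℝ) - 2) / n)
    (hρ : 0 < ρ₁) (hlam₁ : 0 < lam₁) (hlam₂ : lam₁ < lam₂)
    (hβ : β ≥ ρ₁ / ((n : ℝ) - 2 - n * m))
    (hα : α = (2 * β + ρ₁) / (1 - m))
    (g₁ g₂ : ℝ → ℝ)
    (hg₁ : IsSingularSolution n m α β g₁)
    (hg₂ : IsSingularSolution n m α β g₂)
    (hlim₁ : Tendsto (fun r => r ^ (α / β) * g₁ r) (nhdsWithin 0 (Ioi 0))
      (nhds (lam₁ ^ (-(ρ₁ / ((1 - m) * β))))))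
    (hlim₂ : Tendsto (fun r => r ^ (α / β) * g₂ r) (nhdsWithin 0 (Ioi 0))
      (nhds (lam₂ ^ (-(ρ₁ / ((1 - m) * β)))))) :
    ∀ r > 0, g₂ r < g₁ r := by
  have hn' : (3 : ℝ) ≤ n := by exact_mod_cast hn
  have hnm : 0 < (n : ℝ) - 2 - n * m := by
    have := (lt_div_iff₀ (by linarith : (0 : ℝ) < n)).mp hm2
    linarith
  have hm1 : 0 < 1 - m := by nlinarith
  have hβ₀ : 0 < β := (div_pos hρ hnm).trans_le hβ
  have hαβ : α ≤ n * β := by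
    rw [hα, div_le_iff₀ hm1]
    nlinarith [(div_le_iff₀ hnm).mp hβ]
  have hmα : m * (α / β) < n - 2 := by
    have : α / β ≤ n := (div_le_iff₀ hβ₀).mpr hαβ
    nlinarith
  have hL : lam₂ ^ (-(ρ₁ / ((1 - m) * β))) < lam₁ ^ (-(ρ₁ / ((1 - m) * β))) :=
    rpow_lt_rpow_of_neg hlam₁ hlam₂ (neg_neg_of_pos (by positivity))
  exact fun r hr =>
    IsSingularSolution.lt_of_tendsto (by omega) hm hβ₀ hαβ hmα hg₁ hg₂ hlim₁ hlim₂ hL hr
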